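/- arXiv:2404.17969 — 2 statements merged into one kernel-verified Lean document; each statement's English description precedes it below -/
import Mathlib

section
/- A nonempty word is a prefix of some Lyndon word if and only if it is a sesquipower of a Lyndon word distinct from c^k, where c is the maximal letter of the alphabet and k ≥ 2. -/
open List

variable {α : Type*} [LinearOrder α]

/-- `b` is a border of `w`: a proper prefix of `w` which is also a suffix of `w`. -/
def Border (b w : List α) : Prop := b <+: w ∧ b ≠ w ∧ b <:+ w

/-- `w` is bordered if it has a nonempty border. -/
def Bordered (w : List α) : Prop := ∃ b : List α, b ≠ [] ∧ Border b w

/-- `w` is unbordered if it has no nonempty border. -/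
def Unbordered (w : List α) : Prop := ¬ Bordered w

/-- The lexicographic order on words induced by the order on letters. -/
def Lt (x y : List α) : Prop := List.Lex (· < ·) x y

/-- Lexicographic order w.r.t. the inverse order on letters. -/
def AntiLt (x y : List α) : Prop := List.Lex (fun a b : α => b < a) x y

/-- Lyndon word: nonempty and strictly smaller than `v ++ u` for each
nontrivial factorization `w = u ++ v`. -/
def Lyndon (w : List α) : Prop :=
  w ≠ [] ∧ ∀ u v : List α, u ≠ [] → v ≠ [] → w = u ++ v → Lt w (v ++ u)

/-- Anti-Lyndon word: Lyndon word w.r.t. the inverse lexicographic order. -/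
def AntiLyndon (w : List α) : Prop :=
  w ≠ [] ∧ ∀ u v : List α, u ≠ [] → v ≠ [] → w = u ++ v → AntiLt w (v ++ u)

/-- Inverse Lyndon word: every nonempty proper suffix is lexicographically
smaller than the word itself. -/
def InvLyndon (w : List α) : Prop :=
  w ≠ [] ∧ ∀ s : List α, s <:+ w → s ≠ [] → s ≠ w → Lt s w

/-- `x ≪ y` : `x ≺ y` and `x` is not a proper prefix of `y`. -/
def Ll (x y : List α) : Prop := Lt x y ∧ ¬ (x <+: y ∧ x ≠ y)

/-- The power `x^k` of a word. -/
def wpow (x : List α) (k : ℕ) : List α := (List.replicate k x).flatten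

/-- A nonempty word is primitive if it is not a proper power. -/
def Primitive (w : List α) : Prop :=
  w ≠ [] ∧ ∀ (x : List α) (k : ℕ), w = wpow x k → k = 1

/-- A necklace: a power of a Lyndon word. -/
def Necklace (w : List α) : Prop := ∃ (ℓ : List α) (k : ℕ), Lyndon ℓ ∧ w = wpow ℓ k

/-- A prenecklace: a prefix of a necklace. -/
def Prenecklace (w : List α) : Prop := ∃ v : List α, Necklace v ∧ w <+: v

/-- `L` is the Lyndon factorization of `w`: `w` is the concatenation of the
elements of `L`, all Lyndon words, in nonincreasing lexicographic order. -/
def IsCFL (L : List (List α)) (w : List α) : Prop :=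
  (∀ x ∈ L, Lyndon x) ∧ L.flatten = w ∧ List.Chain' (fun a b => Lt b a ∨ b = a) L

/-- `L` is the Lyndon factorization of `w` w.r.t. the inverse order. -/
def IsCFLin (L : List (List α)) (w : List α) : Prop :=
  (∀ x ∈ L, AntiLyndon x) ∧ L.flatten = w ∧ List.Chain' (fun a b => AntiLt b a ∨ b = a) L

/-- Concatenation `ℓ a ++ ℓ (a+1) ++ ⋯ ++ ℓ b`. -/
def cat (ℓ : ℕ → List α) (a b : ℕ) : List α := ((List.range' a (b + 1 - a)).map ℓ).flatten

set_option linter.unusedSectionVars false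
set_option linter.deprecated false

section Aux

theorem lt_append_of_not_prefix {x y : List α} (h : Lt x y) (hnp : ¬ x <+: y) (p q : List α) :
    Lt (x ++ p) (y ++ q) := by
  induction h with
  | nil => exact absurd List.nil_prefix hnp
  | @rel a l₁ b l₂ hab => exact List.Lex.rel hab
  | @cons a l₁ l₂ h ih =>
      exact List.Lex.cons (ih (fun hp => hnp (List.cons_prefix_cons.mpr ⟨rfl, hp⟩)))

theorem lt_append_left_iff (t : List α) {r r' : List α} : Lt (t ++ r) (t ++ r') ↔ Lt r r' := by
  induction t with
  | nil => exact Iff.rfl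
  | cons a t ih =>
    constructor
    · intro h
      cases h with
      | rel h => exact absurd h (lt_irrefl a)
      | cons h => exact ih.mp h
    · intro h
      exact List.Lex.cons (ih.mpr h)

theorem key_mid {u β r r' : List α} {b a : α} (hba : b < a) :
    Lt (((u ++ [b]) ++ β) ++ r) ((u ++ [a]) ++ r') := by
  have h1 : ((u ++ [b]) ++ β) ++ r = u ++ (b :: (β ++ r)) := by simp
  have h2 : (u ++ [a]) ++ r' = u ++ (a :: r') := by simp
  rw [h1, h2]
  exact (lt_append_left_iff u).mpr (List.Lex.rel hba)

theorem lt_of_append_eq_length {u t p q : List α} (hlen : u.length = t.length)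
    (h : Lt (u ++ p) (t ++ q)) : Lt u t ∨ (u = t ∧ Lt p q) := by
  induction u generalizing t with
  | nil =>
    cases t with
    | nil => exact Or.inr ⟨rfl, h⟩
    | cons b t => simp at hlen
  | cons a u ih =>
    cases t with
    | nil => simp at hlen
    | cons b t =>
      cases h with
      | rel h => exact Or.inl (List.Lex.rel h)
      | cons h =>
        rcases ih (by simpa using hlen) h with h' | ⟨rfl, h'⟩
        · exact Or.inl (List.Lex.cons h')
        · exact Or.inr ⟨rfl, h'⟩

theorem not_lt_cons_self_max {c : α} (hc : ∀ a : α, a ≤ c) (r : List α) :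
    ¬ Lt (c :: r) r := by
  induction r with
  | nil => intro h; cases h
  | cons e r ih =>
    intro h
    cases h with
    | rel h => exact absurd h (not_lt.mpr (hc e))
    | cons h => exact ih h

theorem suffix_append_cases {s A B : List α} (h : s <:+ A ++ B) :
    s <:+ B ∨ ∃ s', s' <:+ A ∧ s = s' ++ B := by
  obtain ⟨t, ht⟩ := h
  rcases List.append_eq_append_iff.mp ht with ⟨a', h1, h2⟩ | ⟨c', h1, h2⟩
  · exact Or.inr ⟨a', ⟨t, h1.symm⟩, h2⟩
  · exact Or.inl ⟨c', h2.symm⟩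

theorem wpow_zero (x : List α) : wpow x 0 = [] := rfl

theorem wpow_succ (x : List α) (n : ℕ) : wpow x (n+1) = x ++ wpow x n := by
  simp [wpow, List.replicate_succ]

theorem wpow_add (x : List α) (m n : ℕ) : wpow x (m+n) = wpow x m ++ wpow x n := by
  induction m with
  | zero => rw [Nat.zero_add, wpow_zero, List.nil_append]
  | succ m ih =>
    have h : m + 1 + n = (m + n) + 1 := by omega
    rw [h, wpow_succ, ih, wpow_succ, List.append_assoc]

theorem wpow_one (x : List α) : wpow x 1 = x := by simp [wpow]

theorem wpow_succ' (x : List α) (n : ℕ) : wpow x (n+1) = wpow x n ++ x := by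
  rw [wpow_add, wpow_one]

theorem wpow_ne_nil {x : List α} (hx : x ≠ []) {n : ℕ} (hn : 1 ≤ n) : wpow x n ≠ [] := by
  obtain ⟨k, rfl⟩ : ∃ k, n = k + 1 := ⟨n - 1, by omega⟩
  rw [wpow_succ]
  simp [hx]

theorem wpow_single (a : α) (n : ℕ) : wpow [a] n = List.replicate n a := by
  induction n with
  | zero => rfl
  | succ n ih => rw [wpow_succ, List.replicate_succ, ih]; rfl

theorem suffix_wpow_cases {s x : List α} {m : ℕ} (h : s <:+ wpow x m) (hs : s ≠ []) :
    ∃ v j, v <:+ x ∧ v ≠ [] ∧ j < m ∧ s = v ++ wpow x j := by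
  induction m with
  | zero =>
    rw [wpow_zero] at h
    exact absurd (List.suffix_nil.mp h) hs
  | succ m ih =>
    rw [wpow_succ] at h
    rcases suffix_append_cases h with h | ⟨s', hs', rfl⟩
    · obtain ⟨v, j, hv, hvne, hj, rfl⟩ := ih h
      exact ⟨v, j, hv, hvne, by omega, rfl⟩
    · by_cases h0 : s' = []
      · subst h0
        obtain ⟨v, j, hv, hvne, hj, hsv⟩ := ih List.suffix_rfl
        exact ⟨v, j, hv, hvne, by omega, hsv⟩
      · exact ⟨s', m, hs', h0, Nat.lt_succ_self m, rfl⟩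

theorem lyndon_iff_suffix {w : List α} :
    Lyndon w ↔ w ≠ [] ∧ ∀ s : List α, s <:+ w → s ≠ [] → s ≠ w → Lt w s := by
  constructor
  · rintro ⟨hne, hly⟩
    refine ⟨hne, fun s hs hsne hsnw => ?_⟩
    obtain ⟨u, rfl⟩ := hs
    have hune : u ≠ [] := by rintro rfl; simp at hsnw
    have h1 : Lt (u ++ s) (s ++ u) := hly u s hune hsne rfl
    rcases lt_trichotomy (α := List α) s (u ++ s) with hlt | heq | hgt
    · by_cases hp : s <+: u ++ s
      · obtain ⟨t, ht⟩ := hp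
        have htne : t ≠ [] := by
          rintro rfl
          rw [List.append_nil] at ht
          exact hsnw ht
        have h2 : Lt (u ++ s) (t ++ s) := hly s t hsne htne ht.symm
        have hlen : u.length = t.length := by
          have h3 := congrArg List.length ht
          rw [List.length_append, List.length_append] at h3
          omega
        have h1' : Lt (s ++ t) (s ++ u) := by rw [ht]; exact h1
        have h3 : Lt t u := (lt_append_left_iff s).mp h1'
        rcases lt_of_append_eq_length hlen h2 with h4 | ⟨rfl, h4⟩
        · exact absurd h3 (lt_asymm (α := List α) h4)
        · exact absurd h4 (lt_irrefl (α := List α) s)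
      · have := lt_append_of_not_prefix hlt hp u []
        rw [List.append_nil] at this
        exact absurd h1 (lt_asymm (α := List α) this)
    · exfalso
      have hlen := congrArg List.length heq
      rw [List.length_append] at hlen
      have h5 : u.length = 0 := by omega
      exact hune (List.length_eq_zero_iff.mp h5)
    · exact hgt
  · rintro ⟨hne, hsuf⟩
    refine ⟨hne, fun u v hu hv hw => ?_⟩
    subst hw
    have hvne2 : v ≠ u ++ v := by
      intro hh
      have hlen := congrArg List.length hh
      rw [List.length_append] at hlen
      exact hu (List.length_eq_zero_iff.mp (by omega))
    have h := hsuf v (List.suffix_append u v) hv hvne2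
    have hnp : ¬ (u ++ v) <+: v := by
      intro hp
      have h1 := hp.length_le
      rw [List.length_append] at h1
      have h2 : u.length = 0 := by omega
      exact hu (List.length_eq_zero_iff.mp h2)
    have := lt_append_of_not_prefix h hnp [] u
    rwa [List.append_nil] at this

theorem lyndon_singleton (a : α) : Lyndon [a] := by
  refine ⟨List.cons_ne_nil a [], fun u v hu hv h => ?_⟩
  exfalso
  have hlen := congrArg List.length h
  rw [List.length_append] at hlen
  simp only [List.length_singleton] at hlen
  have h1 : u.length ≠ 0 := fun hh => hu (List.length_eq_zero_iff.mp hh)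
  have h2 : v.length ≠ 0 := fun hh => hv (List.length_eq_zero_iff.mp hh)
  omega

theorem next_letter {u x : List α} (hux : u <+: x) (hune : u ≠ x) :
    ∃ b : α, u ++ [b] <+: x := by
  obtain ⟨t, rfl⟩ := hux
  cases t with
  | nil => exact absurd (by simp) hune
  | cons b t' => exact ⟨b, ⟨t', by simp⟩⟩

theorem duval_step {x u : List α} {b a : α} {m : ℕ} (hx : Lyndon x)
    (hub : u ++ [b] <+: x) (hba : b < a) (hm : 1 ≤ m) :
    Lyndon (wpow x m ++ (u ++ [a])) := by
  obtain ⟨β, hβ⟩ := hub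
  have hxne := hx.1
  have hxs := (lyndon_iff_suffix.mp hx).2
  set y := wpow x m ++ (u ++ [a]) with hy
  -- case (i) : suffixes of the form x^j u a with j < m
  have key1 : ∀ j : ℕ, j < m → Lt y (wpow x j ++ (u ++ [a])) := by
    intro j hj
    have hm' : j + (m - j) = m := by omega
    have h1 : wpow x j ++ (wpow x (m - j) ++ (u ++ [a])) = y := by
      calc wpow x j ++ (wpow x (m - j) ++ (u ++ [a]))
          = (wpow x j ++ wpow x (m - j)) ++ (u ++ [a]) := (List.append_assoc _ _ _).symm
        _ = wpow x (j + (m - j)) ++ (u ++ [a]) := by rw [wpow_add]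
        _ = y := by rw [hy, hm']
    rw [← h1]
    apply (lt_append_left_iff _).mpr
    obtain ⟨k, hk⟩ : ∃ k, m - j = k + 1 := ⟨m - j - 1, by omega⟩
    rw [hk, wpow_succ]
    have h5 := key_mid (u := u) (β := β) (r := wpow x k ++ (u ++ [a])) (r' := ([] : List α)) hba
    rw [hβ, List.append_nil] at h5
    simpa [List.append_assoc] using h5
  -- case (ii) : suffixes starting with a proper nonempty suffix of x
  have key2 : ∀ v r : List α, v <:+ x → v ≠ [] → v ≠ x → Lt y (v ++ r) := by
    intro v r hv hvne hvnx
    have hlvx : Lt x v := hxs v hv hvne hvnx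
    have hlenv : v.length < x.length :=
      lt_of_le_of_ne hv.length_le (fun hh => hvnx (hv.eq_of_length hh))
    have hnp : ¬ x <+: v := fun hp => absurd hp.length_le (by omega)
    obtain ⟨k, hk⟩ : ∃ k, m = k + 1 := ⟨m - 1, by omega⟩
    have h1 : y = x ++ (wpow x k ++ (u ++ [a])) := by
      rw [hy, hk, wpow_succ, List.append_assoc]
    rw [h1]
    exact lt_append_of_not_prefix hlvx hnp _ r
  -- case (iii) : suffixes of the form t ++ [a] with t a proper suffix of u
  have key3 : ∀ t : List α, t <:+ u → t ≠ u → Lt y (t ++ [a]) := by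
    intro t ht htu
    obtain ⟨u', hu'⟩ := ht
    have hu'ne : u' ≠ [] := by rintro rfl; exact htu (by simpa using hu')
    have hxdec : u' ++ (t ++ ([b] ++ β)) = x := by
      rw [← hβ, ← hu']
      simp [List.append_assoc]
    have hsfx : (t ++ ([b] ++ β)) <:+ x := ⟨u', hxdec⟩
    have hsne2 : t ++ ([b] ++ β) ≠ [] := by simp
    have hsnx : t ++ ([b] ++ β) ≠ x := by
      intro hh
      have h3 := congrArg List.length hxdec
      rw [List.length_append, hh] at h3
      exact hu'ne (List.length_eq_zero_iff.mp (by omega))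
    have hlx : Lt x (t ++ ([b] ++ β)) := hxs _ hsfx hsne2 hsnx
    have hlen2 : (t ++ ([b] ++ β)).length < x.length :=
      lt_of_le_of_ne hsfx.length_le (fun hh => hsnx (hsfx.eq_of_length hh))
    have hnp : ¬ x <+: t ++ ([b] ++ β) := fun hp => absurd hp.length_le (by omega)
    obtain ⟨k, hk⟩ : ∃ k, m = k + 1 := ⟨m - 1, by omega⟩
    have h1 : y = x ++ (wpow x k ++ (u ++ [a])) := by
      rw [hy, hk, wpow_succ, List.append_assoc]
    have h2 : Lt y ((t ++ ([b] ++ β)) ++ []) := by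
      rw [h1]; exact lt_append_of_not_prefix hlx hnp _ []
    have h3 : Lt ((t ++ ([b] ++ β)) ++ []) (t ++ [a]) := by
      have h4 := key_mid (u := t) (β := β) (r := ([] : List α)) (r' := ([] : List α)) hba
      rw [List.append_nil] at h4
      simpa [List.append_assoc] using h4
    exact lt_trans (α := List α) h2 h3
  rw [lyndon_iff_suffix]
  refine ⟨by simp [hy], fun s hs hsne hsy => ?_⟩
  rw [hy] at hs
  rcases suffix_append_cases hs with h | ⟨s', hs', rfl⟩
  · -- s <:+ u ++ [a]
    rcases suffix_append_cases h with h2 | ⟨t, ht, rfl⟩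
    · -- s <:+ [a]
      have hsa : s = [a] := by
        obtain ⟨t, ht⟩ := h2
        cases t with
        | nil => simpa using ht
        | cons e t' =>
          exfalso
          have h3 := congrArg List.length ht
          rw [List.length_append] at h3
          simp only [List.length_cons, List.length_nil] at h3
          exact hsne (List.length_eq_zero_iff.mp (by omega))
      subst hsa
      by_cases hu0 : u = []
      · subst hu0
        have := key1 0 hm
        simpa [wpow_zero] using this
      · have := key3 [] List.nil_suffix (Ne.symm hu0)
        simpa using this
    · -- s = t ++ [a], t <:+ u
      by_cases htu : t = u
      · subst htu
        have := key1 0 hm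
        simpa [wpow_zero] using this
      · exact key3 t ht htu
  · -- s = s' ++ (u ++ [a]), s' <:+ wpow x m
    by_cases h0 : s' = []
    · subst h0
      have := key1 0 hm
      simpa [wpow_zero] using this
    · obtain ⟨v, j, hv, hvne, hj, rfl⟩ := suffix_wpow_cases hs' h0
      by_cases hvx : v = x
      · subst hvx
        have hj1 : j + 1 ≠ m := by
          intro hh
          apply hsy
          rw [hy, ← hh, wpow_succ]
        have := key1 (j+1) (by omega)
        rw [wpow_succ] at this
        simpa [List.append_assoc] using this
      · have := key2 v (wpow x j ++ (u ++ [a])) hv hvne hvx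
        simpa [List.append_assoc] using this

theorem prefix_lyndon_not_rep {ℓ : List α} (hl : Lyndon ℓ) {c : α} (hc : ∀ a : α, a ≤ c)
    {k : ℕ} (hk : 2 ≤ k) : ¬ List.replicate k c <+: ℓ := by
  intro hp
  have h2 : [c, c] <+: ℓ := by
    refine List.IsPrefix.trans ?_ hp
    have h5 : k = 2 + (k - 2) := by omega
    have h6 : List.replicate k c = [c, c] ++ List.replicate (k - 2) c := by
      calc List.replicate k c = List.replicate (2 + (k - 2)) c := by rw [← h5]
        _ = List.replicate 2 c ++ List.replicate (k - 2) c := List.replicate_add _ _ _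
        _ = [c, c] ++ List.replicate (k - 2) c := rfl
    rw [h6]
    exact List.prefix_append _ _
  obtain ⟨r, hr⟩ := h2
  have hsuf : (c :: r) <:+ ℓ := ⟨[c], by rw [← hr]; rfl⟩
  have hlt : Lt ℓ (c :: r) := by
    refine (lyndon_iff_suffix.mp hl).2 _ hsuf (List.cons_ne_nil c r) ?_
    intro hh
    have h3 := congrArg List.length hr
    have h4 := congrArg List.length hh
    simp at h3 h4
    omega
  rw [← hr] at hlt
  have hlt2 : Lt (c :: c :: r) (c :: r) := hlt
  cases hlt2 with
  | rel h => exact absurd h (lt_irrefl c)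
  | cons h => exact not_lt_cons_self_max hc r h

theorem prefix_lyndon_sesqui {ℓ : List α} (hl : Lyndon ℓ) :
    ∀ w : List α, w ≠ [] → w <+: ℓ →
      ∃ (x u : List α) (n : ℕ), Lyndon x ∧ u <+: x ∧ u ≠ x ∧ 1 ≤ n ∧ w = wpow x n ++ u := by
  intro w
  induction w using List.reverseRecOn with
  | nil => intro h; exact absurd rfl h
  | append_singleton w' a ih =>
    intro _ hpre
    rcases eq_or_ne w' [] with rfl | hw'
    · refine ⟨[a], [], 1, lyndon_singleton a, List.nil_prefix, ?_, le_refl 1, ?_⟩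
      · intro hh; exact List.cons_ne_nil a [] hh.symm
      · rw [wpow_one, List.append_nil]; rfl
    · obtain ⟨x, u, n, hx, hux, hune, hn, hw⟩ :=
        ih hw' ((List.prefix_append w' [a]).trans hpre)
      obtain ⟨b, hb⟩ := next_letter hux hune
      obtain ⟨β, hβ⟩ := hb
      rcases lt_trichotomy a b with hab | heq | hba
      · -- a < b : contradiction with ℓ Lyndon
        exfalso
        obtain ⟨z, hz⟩ := hpre
        have e1 : ℓ = wpow x n ++ (u ++ a :: z) := by
          rw [← hz, hw]
          simp [List.append_assoc]
        obtain ⟨k, hk⟩ : ∃ k, n = k + 1 := ⟨n - 1, by omega⟩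
        have e2 : wpow x n ++ (u ++ a :: z)
            = (u ++ [b]) ++ (β ++ (wpow x k ++ (u ++ a :: z))) := by
          rw [hk, wpow_succ]
          conv_rhs => rw [← List.append_assoc, hβ]
          simp [List.append_assoc]
        have e3 : ℓ = u ++ (b :: (β ++ (wpow x k ++ (u ++ a :: z)))) := by
          rw [e1, e2]
          simp
        have hsuf : (u ++ a :: z) <:+ ℓ := ⟨wpow x n, e1.symm⟩
        have hslt : Lt ℓ (u ++ a :: z) := by
          refine (lyndon_iff_suffix.mp hl).2 _ hsuf (by simp) ?_
          intro hh
          have h3 := congrArg List.length e1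
          rw [List.length_append, ← hh] at h3
          have h4 : (wpow x n).length = 0 := by omega
          exact wpow_ne_nil hx.1 hn (List.length_eq_zero_iff.mp h4)
        have hslt2 : Lt (u ++ (a :: z)) (u ++ (b :: (β ++ (wpow x k ++ (u ++ a :: z))))) :=
          (lt_append_left_iff u).mpr (List.Lex.rel hab)
        rw [← e3] at hslt2
        exact lt_asymm (α := List α) hslt hslt2
      · -- a = b
        subst heq
        by_cases hx2 : u ++ [a] = x
        · refine ⟨x, [], n + 1, hx, List.nil_prefix, fun hh => hx.1 hh.symm, by omega, ?_⟩
          have h7 : wpow x (n+1) = wpow x n ++ (u ++ [a]) := by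
            rw [wpow_succ', hx2]
          rw [h7, List.append_nil, hw]
          simp [List.append_assoc]
        · refine ⟨x, u ++ [a], n, hx, ⟨β, hβ⟩, hx2, hn, ?_⟩
          rw [hw]
          simp [List.append_assoc]
      · -- b < a : Duval step
        have hly := duval_step hx ⟨β, hβ⟩ hba hn
        refine ⟨wpow x n ++ (u ++ [a]), [], 1, hly, List.nil_prefix, ?_, le_refl 1, ?_⟩
        · intro hh
          exact (by simp : wpow x n ++ (u ++ [a]) ≠ []) hh.symm
        · rw [wpow_one, List.append_nil, hw]
          simp [List.append_assoc]

end Aux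

/-- A nonempty word is a prefix of a Lyndon word iff it is a sesquipower of a
Lyndon word distinct from c^k (c the maximal letter, k ≥ 2). -/
theorem stmt12 (c : α) (hc : ∀ a : α, a ≤ c) (w : List α) (hw : w ≠ []) :
    (∃ ℓ : List α, Lyndon ℓ ∧ w <+: ℓ) ↔
      ((∃ (x u : List α) (n : ℕ), Lyndon x ∧ u <+: x ∧ u ≠ x ∧ 1 ≤ n ∧
          w = wpow x n ++ u) ∧
        ∀ k : ℕ, 2 ≤ k → w ≠ List.replicate k c) := by
  constructor
  · rintro ⟨ℓ, hl, hpre⟩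
    refine ⟨prefix_lyndon_sesqui hl w hw hpre, fun k hk hwk => ?_⟩
    exact prefix_lyndon_not_rep hl hc hk (hwk ▸ hpre)
  · rintro ⟨⟨x, u, n, hx, hux, hune, hn, rfl⟩, hck⟩
    obtain ⟨d, x', rfl⟩ : ∃ d x', x = d :: x' := by
      cases x with
      | nil => exact absurd rfl hx.1
      | cons d x' => exact ⟨d, x', rfl⟩
    rcases lt_or_eq_of_le (hc d) with hdc | hdc
    · -- d < c
      have hpd : ([] : List α) ++ [d] <+: d :: x' := ⟨x', rfl⟩
      have hly := duval_step hx hpd hdc (show 1 ≤ n + 1 by omega)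
      refine ⟨wpow (d :: x') (n+1) ++ ([] ++ [c]), hly, ?_⟩
      have h1 : wpow (d :: x') n ++ u <+: wpow (d :: x') (n+1) := by
        rw [wpow_succ']
        obtain ⟨t, ht⟩ := hux
        rw [← ht]
        exact ⟨t, by simp [List.append_assoc]⟩
      exact h1.trans (List.prefix_append _ _)
    · -- d = c
      subst hdc
      have hx' : x' = [] := by
        by_contra hne
        have hs : x' <:+ d :: x' := ⟨[d], rfl⟩
        have h1 : Lt (d :: x') x' := by
          refine (lyndon_iff_suffix.mp hx).2 x' hs hne ?_
          intro hh
          have h2 := congrArg List.length hh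
          simp at h2
        exact not_lt_cons_self_max hc x' h1
      subst hx'
      have hu0 : u = [] := by
        obtain ⟨t, ht⟩ := hux
        cases u with
        | nil => rfl
        | cons e u' =>
          exfalso
          rw [List.cons_append] at ht
          injection ht with h1 h2
          have h3 := List.append_eq_nil_iff.mp h2
          exact hune (by rw [h1, h3.1])
      subst hu0
      have hn1 : n = 1 := by
        by_contra h
        have h2 : 2 ≤ n := by omega
        exact hck n h2 (by rw [List.append_nil, wpow_single])
      subst hn1
      refine ⟨[d], lyndon_singleton d, ?_⟩
      rw [wpow_one, List.append_nil]
end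

section
/- Let w ∈ Σ⁺, let ℓ₁ be the longest prefix of w which is a Lyndon word, and let w' be such that w = ℓ₁w'. If w' ≠ 1 (empty word), then CFL(w) = (ℓ₁, CFL(w')), i.e., the Lyndon factorization of w is ℓ₁ followed by the Lyndon factorization of w'. -/
open List

variable {α : Type*} [LinearOrder α]

theorem lex_trans {x y z : List α} (h1 : List.Lex (· < ·) x y) (h2 : List.Lex (· < ·) y z) :
    List.Lex (· < ·) x z := List.lex_trans lt_trans h1 h2

theorem lex_asymm {x y : List α} (h1 : List.Lex (· < ·) x y) (h2 : List.Lex (· < ·) y x) : False :=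
  asymm h1 h2

theorem lex_trichot (x y : List α) :
    List.Lex (· < ·) x y ∨ x = y ∨ List.Lex (· < ·) y x :=
  trichotomous x y

theorem lex_append_cancel {p x y : List α} (h : List.Lex (· < ·) (p ++ x) (p ++ y)) :
    List.Lex (· < ·) x y := by
  induction p with
  | nil => exact h
  | cons a p ih => exact ih ((List.lex_cons_iff).mp h)

theorem lex_of_prefix {x y : List α} (h : x <+: y) (hne : x ≠ y) : List.Lex (· < ·) x y := by
  obtain ⟨t, rfl⟩ := h
  have ht : t ≠ [] := by rintro rfl; simp at hne
  induction x with
  | nil => cases t with | nil => exact absurd rfl ht | cons a t => exact List.Lex.nil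
  | cons a x ih => exact List.Lex.cons (ih (by simp [ht]))

theorem lex_append_of_not_prefix {x y : List α} (h : List.Lex (· < ·) x y) (hp : ¬ x <+: y) :
    ∀ z z', List.Lex (· < ·) (x ++ z) (y ++ z') := by
  induction h with
  | nil => exact fun z z' => absurd (List.nil_prefix) hp
  | @cons a l1 l2 h ih =>
    intro z z'
    exact List.Lex.cons (ih (fun hpp => hp (List.cons_prefix_cons.mpr ⟨rfl, hpp⟩)) z z')
  | rel h => exact fun z z' => List.Lex.rel h

theorem lex_same_len {x y z z' : List α} (h : List.Lex (· < ·) (x ++ z) (y ++ z'))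
    (hl : x.length = y.length) : List.Lex (· < ·) x y ∨ x = y := by
  induction x generalizing y with
  | nil => right; exact (List.length_eq_zero_iff.mp hl.symm).symm
  | cons a x ih =>
    cases y with
    | nil => simp at hl
    | cons b y =>
      simp only [List.cons_append] at h
      cases h with
      | cons h =>
        rcases ih h (by simpa using hl) with h' | h'
        · exact Or.inl (List.Lex.cons h')
        · exact Or.inr (by rw [h'])
      | rel h => exact Or.inl (List.Lex.rel h)

theorem lyndon_unbordered {w : List α} (h : Lyndon w) : Unbordered w := by
  rintro ⟨b, hb, hpre, hne, hsuf⟩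
  obtain ⟨t, ht⟩ := hpre
  obtain ⟨u, hu⟩ := hsuf
  have htne : t ≠ [] := by rintro rfl; exact hne (by simpa using ht)
  have hune : u ≠ [] := by rintro rfl; exact hne (by simpa using hu)
  have r1 : Lt w (t ++ b) := h.2 b t hb htne ht.symm
  have r2 : Lt w (b ++ u) := h.2 u b hune hb hu.symm
  rw [← hu] at r1
  rw [← ht] at r2
  have hlen : u.length = t.length := by
    have := congrArg List.length (hu.trans ht.symm); simp at this; omega
  rcases lex_same_len r1 hlen with h' | h'
  · exact lex_asymm h' (lex_append_cancel r2)
  · subst h'; exact lex_asymm (lex_append_cancel r2) (lex_append_cancel r2)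

theorem lyndon_lt_suffix {w s : List α} (h : Lyndon w) (hs : s <:+ w) (hsne : s ≠ [])
    (hsnw : s ≠ w) : Lt w s := by
  obtain ⟨u, hu⟩ := hs
  have hune : u ≠ [] := by rintro rfl; simp at hu; exact hsnw hu
  have rot : Lt w (s ++ u) := h.2 u s hune hsne hu.symm
  have hnp : ¬ s <+: w := fun hp => lyndon_unbordered h ⟨s, hsne, hp, hsnw, u, hu⟩
  rcases lex_trichot w s with h' | h' | h'
  · exact h'
  · exact absurd h'.symm hsnw
  · have : List.Lex (· < ·) (s ++ u) (w ++ []) := lex_append_of_not_prefix h' hnp u []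
    rw [List.append_nil] at this
    exact absurd rot (fun hh => lex_asymm hh this)

theorem lyndon_of_lt_suffix {w : List α} (hw : w ≠ [])
    (h : ∀ s, s <:+ w → s ≠ [] → s ≠ w → Lt w s) : Lyndon w := by
  refine ⟨hw, fun u v hu hv hsplit => ?_⟩
  have hvs : v <:+ w := ⟨u, hsplit.symm⟩
  have hvnw : v ≠ w := by
    intro hvw
    have hlen : w.length = u.length + v.length := by rw [hsplit]; simp
    rw [← hvw] at hlen
    exact hu (List.length_eq_zero_iff.mp (by omega))
  have hwv : Lt w v := h v hvs hv hvnw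
  have hnp : ¬ w <+: v := by
    intro hp
    have h1 := hp.length_le
    have h2 : w.length = u.length + v.length := by rw [hsplit]; simp
    exact hu (List.length_eq_zero_iff.mp (by omega))
  have := lex_append_of_not_prefix hwv hnp [] u
  rwa [List.append_nil] at this

theorem lyndon_append {u v : List α} (hu : Lyndon u) (hv : Lyndon v) (huv : Lt u v) :
    Lyndon (u ++ v) := by
  have hune : u ≠ [] := hu.1
  have hvne : v ≠ [] := hv.1
  have hne : u ≠ v := by rintro rfl; exact lex_asymm huv huv
  -- key: u ++ v < v
  have key : Lt (u ++ v) v := by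
    by_cases hp : u <+: v
    · obtain ⟨z, hz⟩ := hp
      have hzne : z ≠ [] := by rintro rfl; simp at hz; exact hne hz
      have hvz : Lt v z := lyndon_lt_suffix hv ⟨u, hz⟩ hzne
        (by intro hzv
            have hlen : v.length = u.length + z.length := by rw [← hz]; simp
            rw [hzv] at hlen
            exact hune (List.length_eq_zero_iff.mp (by omega)))
      have : List.Lex (· < ·) (u ++ v) (u ++ z) := List.Lex.append_left _ hvz u
      rwa [hz] at this
    · have := lex_append_of_not_prefix huv hp v []
      rwa [List.append_nil] at this
  refine lyndon_of_lt_suffix (by simp [hune]) (fun s hs hsne hsnw => ?_)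
  obtain ⟨p, hp⟩ := hs
  rcases List.append_eq_append_iff.mp hp with ⟨t, hut, hst⟩ | ⟨c, hpc, hvc⟩
  · -- u = p ++ t, s = t ++ v
    by_cases htne : t = []
    · subst htne; simp at hst; subst hst; exact key
    · have htnu : t ≠ u := by
        intro htu
        apply hsnw
        rw [hst, htu]
      have hlt : Lt u t := lyndon_lt_suffix hu ⟨p, hut.symm⟩ htne htnu
      have hltlen : t.length < u.length := by
        have := congrArg List.length hut; simp at this
        have hpne : p ≠ [] := by rintro rfl; simp at hut; exact htnu hut.symm
        have : p.length ≠ 0 := fun h0 => hpne (List.length_eq_zero_iff.mp h0)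
        omega
      have hnp : ¬ u <+: t := fun hpp => absurd hpp.length_le (by omega)
      have := lex_append_of_not_prefix hlt hnp v v
      rwa [← hst] at this
  · -- p = u ++ c, v = c ++ s : s is a suffix of v
    by_cases hsv : s = v
    · subst hsv; exact key
    · exact lex_trans key (lyndon_lt_suffix hv ⟨c, hvc.symm⟩ hsne hsv)

/-- If ℓ₁ is the longest Lyndon prefix of w and w = ℓ₁ w' with w' ≠ 1, then
CFL(w) = (ℓ₁, CFL(w')). -/
theorem stmt15 (w ℓ₁ w' : List α) (hw : w ≠ []) (hℓ : Lyndon ℓ₁) (hpre : ℓ₁ <+: w)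
    (hlong : ∀ p : List α, p <+: w → Lyndon p → p.length ≤ ℓ₁.length)
    (hsplit : w = ℓ₁ ++ w') (hw' : w' ≠ []) (L : List (List α)) (hL : IsCFL L w') :
    IsCFL (ℓ₁ :: L) w := by
  obtain ⟨hLyn, hjoin, hchain⟩ := hL
  refine ⟨?_, ?_, ?_⟩
  · intro x hx
    rcases List.mem_cons.mp hx with rfl | hx
    · exact hℓ
    · exact hLyn x hx
  · simp [hjoin, hsplit]
  · rw [List.Chain', List.isChain_cons]
    refine ⟨?_, hchain⟩
    intro m hm
    cases L with
    | nil => simp at hm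
    | cons m' L' =>
      have hmm : m' = m := by simpa using hm
      subst hmm
      have hmL : Lyndon m' := hLyn m' (by simp)
      rcases lex_trichot m' ℓ₁ with h' | h' | h'
      · exact Or.inl h'
      · exact Or.inr h'
      · exfalso
        have hLynApp : Lyndon (ℓ₁ ++ m') := lyndon_append hℓ hmL h'
        have hpref : ℓ₁ ++ m' <+: w := by
          rw [hsplit]
          have : m' <+: w' := ⟨L'.flatten, by simpa using hjoin⟩
          obtain ⟨r, hr⟩ := this
          exact ⟨r, by rw [List.append_assoc, hr]⟩
        have hlen := hlong (ℓ₁ ++ m') hpref hLynApp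
        rw [List.length_append] at hlen
        exact hmL.1 (List.length_eq_zero_iff.mp (by omega))
end
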